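/- arXiv:1201.5973 — 3 statements merged into one kernel-verified Lean document; each statement's English description precedes it below -/
import Mathlib

section
/- Let R ⊆ S be a module-finite inclusion of integral domains with fraction fields K ⊆ L. Suppose Φ ∈ Hom_K(L, K) satisfies Φ(S) ⊆ R and the restriction Φ|_S : S → R generates Hom_R(S, R) as an S-module. If x ∈ L satisfies Φ(x·s) ∈ R for all s ∈ S, then x ∈ S. -/
open scoped BigOperators

section Preamble

variable {Ω : Type*} [Field Ω]

/-- The subring of `p^e`-th roots of elements of a subring `R` of `Ω`. -/
def pRoots (p : ℕ) [Fact p.Prime] [CharP Ω p] (e : ℕ) (R : Subring Ω) : Subring Ω where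
  carrier := {x | x ^ p ^ e ∈ R}
  mul_mem' := fun ha hb => by simpa [mul_pow] using R.mul_mem ha hb
  one_mem' := by simpa using R.one_mem
  add_mem' := fun {a b} ha hb => by
    have h : (a + b) ^ p ^ e = a ^ p ^ e + b ^ p ^ e := add_pow_char_pow a b p e
    simpa [Set.mem_setOf_eq, h] using R.add_mem ha hb
  zero_mem' := by
    simpa [zero_pow (pow_ne_zero e (Fact.out (p := p.Prime)).ne_zero)] using R.zero_mem
  neg_mem' := fun {a} ha => by
    have h : (-a) ^ p ^ e = (-1 : Ω) ^ p ^ e * a ^ p ^ e := by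
      rw [← neg_one_mul, mul_pow]
    show (-a) ^ p ^ e ∈ R
    rcases neg_one_pow_eq_or Ω (p ^ e) with h1 | h1
    · rw [h, h1, one_mul]; exact ha
    · rw [h, h1, neg_one_mul]; exact R.neg_mem ha

/-- `φ : Ω → Ω` restricts to an `A`-linear map from `M` to `N` (all subrings of `Ω`). -/
structure IsLinearOn (A M N : Subring Ω) (φ : Ω → Ω) : Prop where
  maps_to : ∀ x ∈ M, φ x ∈ N
  map_add : ∀ x ∈ M, ∀ y ∈ M, φ (x + y) = φ x + φ y
  map_smul : ∀ a ∈ A, ∀ x ∈ M, φ (a * x) = a * φ x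

/-- The family `b` is a free `A`-module basis of `M` (subrings of `Ω`). -/
def IsBasisOn (A M : Subring Ω) {ι : Type*} [Fintype ι] (b : ι → Ω) : Prop :=
  (∀ i, b i ∈ M) ∧
    ∀ x ∈ M, ∃! c : ι → Ω, (∀ i, c i ∈ A) ∧ x = ∑ i, c i * b i

/-- The fraction field of a subring `R` of `Ω`, as a subfield of `Ω`. -/
def fracField (R : Subring Ω) : Subfield Ω where
  carrier := {x | ∃ a ∈ R, ∃ b ∈ R, b ≠ 0 ∧ x = a / b}
  mul_mem' := by
    rintro x y ⟨a, ha, b, hb, hb0, rfl⟩ ⟨c, hc, d, hd, hd0, rfl⟩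
    exact ⟨a * c, R.mul_mem ha hc, b * d, R.mul_mem hb hd, mul_ne_zero hb0 hd0, by
      field_simp⟩
  one_mem' := ⟨1, R.one_mem, 1, R.one_mem, one_ne_zero, by simp⟩
  add_mem' := by
    rintro x y ⟨a, ha, b, hb, hb0, rfl⟩ ⟨c, hc, d, hd, hd0, rfl⟩
    refine ⟨a * d + c * b, R.add_mem (R.mul_mem ha hd) (R.mul_mem hc hb),
      b * d, R.mul_mem hb hd, mul_ne_zero hb0 hd0, ?_⟩
    field_simp
  zero_mem' := ⟨0, R.zero_mem, 1, R.one_mem, one_ne_zero, by simp⟩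
  neg_mem' := by
    rintro x ⟨a, ha, b, hb, hb0, rfl⟩
    exact ⟨-a, R.neg_mem ha, b, hb, hb0, by ring⟩
  inv_mem' := by
    rintro x ⟨a, ha, b, hb, hb0, rfl⟩
    by_cases ha0 : a = 0
    · exact ⟨0, R.zero_mem, 1, R.one_mem, one_ne_zero, by simp [ha0]⟩
    · exact ⟨b, hb, a, ha, ha0, by field_simp⟩

/-- Every element of `L` is separable over the subfield `K`. -/
def IsSeparableOn (K L : Subfield Ω) : Prop :=
  ∀ x ∈ L, ∃ f : Polynomial Ω,
    (∀ i, f.coeff i ∈ (K : Set Ω)) ∧ f.Monic ∧ f.Separable ∧ f.eval x = 0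

/-- `S` is a finitely generated `R`-module (module-finite inclusion). -/
def IsModuleFiniteOn (A M : Subring Ω) : Prop :=
  ∃ (n : ℕ) (g : Fin n → Ω), (∀ i, g i ∈ M) ∧
    ∀ x ∈ M, ∃ c : Fin n → Ω, (∀ i, c i ∈ A) ∧ x = ∑ i, c i * g i

/-- `A` is a discrete valuation ring with uniformizer `t`:  `t` is a nonunit of `A`
and every nonzero element of `A` is a unit times a power of `t`. -/
def IsDVRWith (A : Subring Ω) (t : Ω) : Prop :=
  t ∈ A ∧ t ≠ 0 ∧ (¬ ∃ w ∈ A, t * w = 1) ∧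
    ∀ x ∈ A, x ≠ 0 → ∃ (k : ℕ) (w : Ω), w ∈ A ∧ (∃ w' ∈ A, w * w' = 1) ∧ x = w * t ^ k

/-- The images of the family `b` (of elements of `M`) form a basis of `M / tM` over
`A / rA`. -/
def IsBasisModOn (A M : Subring Ω) (r t : Ω) {ι : Type*} [Fintype ι] (b : ι → Ω) : Prop :=
  (∀ j, b j ∈ M) ∧
  (∀ x ∈ M, ∃ c : ι → Ω, (∀ j, c j ∈ A) ∧ ∃ y ∈ M, x - ∑ j, c j * b j = t * y) ∧
  (∀ c : ι → Ω, (∀ j, c j ∈ A) → (∃ y ∈ M, ∑ j, c j * b j = t * y) →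
    ∀ j, ∃ a ∈ A, c j = r * a)

/-- `A` is integrally closed in its fraction field (inside `Ω`). -/
def IsNormalOn (A : Subring Ω) : Prop :=
  ∀ x ∈ fracField A, (∃ f : Polynomial Ω, f.Monic ∧ (∀ i, f.coeff i ∈ (A : Set Ω)) ∧
    f.eval x = 0) → x ∈ A

/-- `A` is F-finite: its ring of `p`-th roots is a finite `A`-module. -/
def IsFFiniteOn (p : ℕ) [Fact p.Prime] [CharP Ω p] (A : Subring Ω) : Prop :=
  IsModuleFiniteOn A (pRoots p 1 A)

end Preamble

/-! Write `x = u / v` with `u, v ∈ S`. The map `a ↦ Φ (x * a)` lies in `Hom_R(S, R)`, so it is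
`a ↦ Φ (t * a)` for some `t ∈ S`; evaluating at `v * b` shows that `Φ` vanishes on `w S` for
`w = u - t v ∈ S`. Hence every element of `Hom_R(S, R)` vanishes at `w`. But a module-finite `S`
has, for each `w ≠ 0`, some `ψ ∈ Hom_R(S, R)` with `ψ w ≠ 0`: take a `K`-linear functional with
`λ w = 1` and clear the denominators of its values on generators of `S`. So `w = 0`, i.e. `x = t`. -/

section Linear

variable {Ω : Type*} [Field Ω]

lemma mem_fracField_of_mem (R : Subring Ω) {a : Ω} (ha : a ∈ R) : a ∈ fracField R :=
  ⟨a, ha, 1, R.one_mem, one_ne_zero, (div_one a).symm⟩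

lemma exists_mul_mem_of_forall_mem_fracField {ι : Type*} [Fintype ι] (R : Subring Ω)
    (f : ι → Ω) (hf : ∀ i, f i ∈ fracField R) : ∃ r ∈ R, r ≠ 0 ∧ ∀ i, r * f i ∈ R := by
  classical
  choose a ha b hb hb0 hab using hf
  refine ⟨∏ i, b i, prod_mem fun i _ => hb i, Finset.prod_ne_zero_iff.mpr fun i _ => hb0 i,
    fun i => ?_⟩
  have hr : (∏ j, b j) * f i = (∏ j ∈ Finset.univ.erase i, b j) * a i := by
    rw [← Finset.prod_erase_mul _ _ (Finset.mem_univ i), hab i]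
    field_simp [hb0 i]
  exact hr ▸ R.mul_mem (prod_mem fun j _ => hb j) (ha i)

namespace IsLinearOn

variable {A M N : Subring Ω} {φ : Ω → Ω}

lemma map_sub (hφ : IsLinearOn A M N φ) {x y : Ω} (hx : x ∈ M) (hy : y ∈ M) :
    φ (x - y) = φ x - φ y := by
  have h := hφ.map_add (x - y) (sub_mem hx hy) y hy
  rw [sub_add_cancel] at h
  exact eq_sub_of_add_eq h.symm

lemma comp_mul_left {A' M' N' : Subring Ω} (hφ : IsLinearOn A' M' N' φ) (hA : A ≤ A')
    (hM : M ≤ M') {x : Ω} (hx : x ∈ M') (hN : ∀ a ∈ M, φ (x * a) ∈ N) :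
    IsLinearOn A M N (fun a => φ (x * a)) where
  maps_to := hN
  map_add a ha b hb := by
    simp only [mul_add]
    exact hφ.map_add _ (mul_mem hx (hM ha)) _ (mul_mem hx (hM hb))
  map_smul c hc a ha := by
    simp only [mul_left_comm x c a]
    exact hφ.map_smul c (hA hc) _ (mul_mem hx (hM ha))

end IsLinearOn

lemma exists_isLinearOn_apply_ne_zero {R S : Subring Ω} (hfin : IsModuleFiniteOn R S)
    {w : Ω} (hw : w ≠ 0) : ∃ ψ : Ω → Ω, IsLinearOn R S R ψ ∧ ψ w ≠ 0 := by
  obtain ⟨n, g, -, hg⟩ := hfin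
  obtain ⟨l, hlw⟩ := Module.Projective.exists_dual_eq_one (fracField R) hw
  have hl_mul : ∀ c ∈ fracField R, ∀ z, (l (c * z) : Ω) = c * l z := fun c hc z =>
    congrArg Subtype.val (l.map_smul ⟨c, hc⟩ z)
  obtain ⟨r, hr, hr0, hrg⟩ :=
    exists_mul_mem_of_forall_mem_fracField R (fun j => (l (g j) : Ω)) fun j => (l (g j)).2
  refine ⟨fun a => r * l a, ⟨fun a ha => ?_, fun a _ b _ => ?_, fun c hc a _ => ?_⟩, ?_⟩
  · obtain ⟨c, hc, rfl⟩ := hg a ha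
    have hl_sum : (l (∑ j, c j * g j) : Ω) = ∑ j, c j * l (g j) := by
      rw [map_sum, AddSubmonoidClass.coe_finsetSum]
      exact Finset.sum_congr rfl fun j _ => hl_mul _ (mem_fracField_of_mem R (hc j)) _
    rw [hl_sum, Finset.mul_sum]
    exact sum_mem fun j _ => mul_left_comm r (c j) _ ▸ R.mul_mem (hc j) (hrg j)
  · simp only [map_add, Subfield.coe_add, mul_add]
  · simp only [hl_mul c (mem_fracField_of_mem R hc), mul_left_comm r]
  · simpa [hlw] using hr0

end Linear

theorem mem_of_generator_maps_into_general {Ω : Type*} [Field Ω]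
    (R S : Subring Ω) (hfin : IsModuleFiniteOn R S)
    (Φ : Ω → Ω)
    (hΦ : IsLinearOn (fracField R).toSubring (fracField S).toSubring
      (fracField R).toSubring Φ)
    (hgen : ∀ ψ : Ω → Ω, IsLinearOn R S R ψ → ∃ t ∈ S, ∀ a ∈ S, ψ a = Φ (t * a))
    (x : Ω) (hx : x ∈ fracField S) (hxS : ∀ a ∈ S, Φ (x * a) ∈ R) :
    x ∈ S := by
  have hSL : S ≤ (fracField S).toSubring := fun a => mem_fracField_of_mem S
  obtain ⟨t, htS, ht⟩ :=
    hgen _ (hΦ.comp_mul_left (fun c => mem_fracField_of_mem R) hSL hx hxS)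
  obtain ⟨u, hu, v, hv, hv0, rfl⟩ := hx
  have hwS : u - t * v ∈ S := S.sub_mem hu (S.mul_mem htS hv)
  have hΦw : ∀ b ∈ S, Φ ((u - t * v) * b) = 0 := by
    intro b hb
    have h := ht (v * b) (S.mul_mem hv hb)
    rw [show u / v * (v * b) = u * b by field_simp, ← mul_assoc] at h
    rw [sub_mul, hΦ.map_sub (hSL (S.mul_mem hu hb)) (hSL (S.mul_mem (S.mul_mem htS hv) hb)), h,
      sub_self]
  by_cases hw0 : u - t * v = 0
  · rwa [sub_eq_zero.mp hw0, mul_div_cancel_right₀ t hv0]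
  obtain ⟨ψ, hψ, hψw⟩ := exists_isLinearOn_apply_ne_zero hfin hw0
  obtain ⟨t', ht'S, ht'⟩ := hgen ψ hψ
  exact (hψw ((ht' _ hwS).trans (mul_comm t' _ ▸ hΦw t' ht'S))).elim

/-- if `Φ : L → K` is `K`-linear with `Φ(S) ⊆ R` and `Φ|_S` generates
`Hom_R(S,R)` as an `S`-module, then `Φ(xS) ⊆ R` forces `x ∈ S`. -/
theorem mem_of_generator_maps_into {Ω : Type*} [Field Ω]
    (R S : Subring Ω) (hRS : R ≤ S) (hfin : IsModuleFiniteOn R S)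
    (Φ : Ω → Ω)
    (hΦ : IsLinearOn (fracField R).toSubring (fracField S).toSubring
      (fracField R).toSubring Φ)
    (hΦS : ∀ a ∈ S, Φ a ∈ R)
    (hgen : ∀ ψ : Ω → Ω, IsLinearOn R S R ψ → ∃ t ∈ S, ∀ a ∈ S, ψ a = Φ (t * a))
    (x : Ω) (hx : x ∈ fracField S) (hxS : ∀ a ∈ S, Φ (x * a) ∈ R) :
    x ∈ S :=
  mem_of_generator_maps_into_general R S hfin Φ hΦ hgen x hx hxS
end

section
/- Let R = 𝔽₃[y] ⊆ S = 𝔽₃[x] with y = x⁴, and let φ : R^{1/3} → R be an R-linear map (determined by the values φ(1), φ(y^{1/3}), φ(y^{2/3}) on the free basis 1, y^{1/3}, y^{2/3}). Then φ extends to an S-linear map φ̄ : S^{1/3} → S (agreeing with φ on R^{1/3}) if and only if x divides φ(y^{1/3}) in S and x² divides φ(y^{2/3}) in S; equivalently, if and only if y divides φ(y^{1/3}) in R and y divides φ(y^{2/3}) in R. -/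
/-!
Put `s = x^{1/3}`. Frobenius is injective and fixes `𝔽₃`, so `S^{1/3} = 𝔽₃[s]` and
`R^{1/3} = 𝔽₃[s⁴]`. As `s` is transcendental, `S^{1/3}` is free over `S = 𝔽₃[s³]` on `1, s, s²`,
while `R^{1/3}` is spanned over `R` by `1, s⁴ = x s, s⁸ = x² s²`. An `S`-linear map on `S^{1/3}`
may take arbitrary values on `1, s, s²`, and it restricts to `φ` exactly when
`φ(s⁴) = x φ̄(s)` and `φ(s⁸) = x² φ̄(s²)`. Finally, an element of `𝔽₃[x⁴]` divisible by `x` in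
`𝔽₃[x]` has, as a polynomial in `x⁴`, no constant term, hence is divisible by `x⁴` in `𝔽₃[x⁴]`.
-/


open scoped BigOperators

instance : Fact (Nat.Prime 3) := ⟨by norm_num⟩

open Polynomial

section ExpandDecomposition

variable {R : Type*} [CommSemiring R] {n : ℕ}

theorem Polynomial.coeff_sum_X_pow_mul_expand (f : Fin n → R[X]) (m : ℕ) (j : Fin n) :
    (∑ i : Fin n, X ^ (i : ℕ) * expand R n (f i)).coeff (n * m + j) = (f j).coeff m := by
  rw [finsetSum_coeff, Finset.sum_eq_single j]
  · rw [coeff_X_pow_mul', if_pos (by omega), Nat.add_sub_cancel, coeff_expand_mul' j.pos]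
  · intro i _ hij
    rw [coeff_X_pow_mul']
    split_ifs with hi
    · rw [coeff_expand j.pos, if_neg]
      intro hdvd
      have hmod : i % n = (n * m + j) % n := (Nat.modEq_iff_dvd' hi).2 hdvd
      rw [Nat.mul_add_mod, Nat.mod_eq_of_lt i.isLt, Nat.mod_eq_of_lt j.isLt] at hmod
      exact hij (Fin.ext hmod)
    · rfl
  · simp

theorem Polynomial.eq_zero_of_sum_X_pow_mul_expand_eq_zero {f : Fin n → R[X]}
    (h : ∑ i : Fin n, X ^ (i : ℕ) * expand R n (f i) = 0) (j : Fin n) : f j = 0 := by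
  ext m
  rw [← coeff_sum_X_pow_mul_expand f m j, h, coeff_zero, coeff_zero]

end ExpandDecomposition

section Closure

variable {Ω : Type*} [CommRing Ω]

theorem Subring.closure_singleton_pow_le (u : Ω) (k : ℕ) :
    Subring.closure {u ^ k} ≤ Subring.closure {u} :=
  Subring.closure_le.2 <|
    Set.singleton_subset_iff.2 (pow_mem (Subring.subset_closure (Set.mem_singleton u)) k)

/-- Reduce a polynomial expression in `u` modulo `X ^ n - u ^ n`. -/
theorem Subring.exists_eq_sum_mul_pow_of_mem_closure [Nontrivial Ω] {A : Subring Ω} {u : Ω}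
    {n : ℕ} (hn : n ≠ 0) (hu : u ^ n ∈ A) {z : Ω} (hz : z ∈ Subring.closure {u}) :
    ∃ c : Fin n → Ω, (∀ i, c i ∈ A) ∧ z = ∑ i, c i * u ^ (i : ℕ) := by
  have hadjoin : Subring.closure {u} ≤ (Algebra.adjoin A {u}).toSubring :=
    Subring.closure_le.2 Algebra.subset_adjoin
  have hz' : z ∈ (aeval (R := A) u).range := by
    rw [← Algebra.adjoin_singleton_eq_range_aeval]; exact hadjoin hz
  obtain ⟨f, rfl⟩ := (AlgHom.mem_range _).1 hz'
  set q : A[X] := X ^ n - C ⟨u ^ n, hu⟩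
  have hq : q.Monic := monic_X_pow_sub_C _ hn
  have hqdeg : q.natDegree = n := natDegree_X_pow_sub_C
  have hdeg : (f %ₘ q).natDegree < n :=
    hqdeg ▸ natDegree_modByMonic_lt f hq fun h => hn (by rw [← hqdeg, h, natDegree_one])
  refine ⟨fun i => (f %ₘ q).coeff i, fun i => ((f %ₘ q).coeff i).2, ?_⟩
  have hroot : aeval u q = 0 := by
    simp only [q, map_sub, map_pow, aeval_X, aeval_C]
    exact sub_self _
  rw [← aeval_modByMonic_eq_self_of_root hroot, aeval_eq_sum_range' hdeg, Finset.sum_range]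
  rfl

end Closure

section CharP

variable {p : ℕ} [Fact p.Prime] {Ω : Type*} [Field Ω] [Algebra (ZMod p) Ω]

variable (p) in
theorem Subring.mem_closure_singleton_iff_exists_aeval {u z : Ω} :
    z ∈ Subring.closure {u} ↔ ∃ f : (ZMod p)[X], aeval u f = z := by
  have hrange : Set.range (algebraMap (ZMod p) Ω) ⊆ Subring.closure {u} := by
    rintro _ ⟨x, rfl⟩
    obtain ⟨k, rfl⟩ := ZMod.natCast_zmod_surjective x
    rw [map_natCast]
    exact natCast_mem _ k
  have hclosure : Subring.closure {u} = (Algebra.adjoin (ZMod p) {u}).toSubring := by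
    rw [Algebra.adjoin_eq_ring_closure]
    exact le_antisymm (Subring.closure_mono Set.subset_union_right)
      (Subring.closure_le.2 (Set.union_subset hrange Subring.subset_closure))
  rw [hclosure, Subalgebra.mem_toSubring, Algebra.adjoin_singleton_eq_range_aeval,
    AlgHom.mem_range]

theorem aeval_pow_char (u : Ω) (f : (ZMod p)[X]) : aeval u f ^ p = aeval (u ^ p) f := by
  rw [← map_pow, ← ZMod.expand_card, expand_aeval]

theorem pRoots_closure_singleton_pow_char [CharP Ω p] (u : Ω) :
    pRoots p 1 (Subring.closure {u ^ p}) = Subring.closure {u} := by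
  ext z
  change z ^ p ^ 1 ∈ Subring.closure {u ^ p} ↔ z ∈ Subring.closure {u}
  simp only [pow_one, Subring.mem_closure_singleton_iff_exists_aeval p]
  constructor
  · rintro ⟨f, hf⟩
    exact ⟨f, frobenius_inj Ω p (by rw [frobenius_def, frobenius_def, aeval_pow_char, hf])⟩
  · rintro ⟨f, rfl⟩
    exact ⟨f, (aeval_pow_char u f).symm⟩

theorem transcendental_zmod_of_forall_coeff_mem_bot {t : Ω}
    (ht : ∀ f : Polynomial Ω, (∀ i, f.coeff i ∈ (⊥ : Subring Ω)) → f.eval t = 0 → f = 0) :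
    Transcendental (ZMod p) t := by
  rintro ⟨f, hf, hft⟩
  refine hf ((Polynomial.map_eq_zero_iff (algebraMap (ZMod p) Ω).injective).1
    (ht _ (fun i => ?_) ?_))
  · obtain ⟨k, hk⟩ := ZMod.natCast_zmod_surjective (f.coeff i)
    rw [coeff_map, ← hk, map_natCast, Subring.mem_bot]
    exact ⟨k, Int.cast_natCast k⟩
  · rwa [eval_map_algebraMap]

theorem eq_zero_of_sum_mul_pow_eq_zero {s : Ω} (hs : Transcendental (ZMod p) s) {n : ℕ}
    {c : Fin n → Ω} (hc : ∀ i, c i ∈ Subring.closure {s ^ n})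
    (h : ∑ i, c i * s ^ (i : ℕ) = 0) (j : Fin n) : c j = 0 := by
  choose f hf using fun i => (Subring.mem_closure_singleton_iff_exists_aeval p).1 (hc i)
  have hpoly : ∑ i : Fin n, X ^ (i : ℕ) * expand (ZMod p) n (f i) = 0 := by
    apply transcendental_iff_injective.1 hs
    simpa only [map_sum, map_mul, map_pow, aeval_X, expand_aeval, hf, map_zero, mul_comm]
      using h
  rw [← hf j, eq_zero_of_sum_X_pow_mul_expand_eq_zero hpoly j, map_zero]

theorem isBasisOn_closure_singleton_pow {s : Ω} (hs : Transcendental (ZMod p) s) {n : ℕ}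
    (hn : n ≠ 0) :
    IsBasisOn (Subring.closure {s ^ n}) (Subring.closure {s}) (fun i : Fin n => s ^ (i : ℕ)) := by
  have hsn : s ^ n ∈ Subring.closure {s ^ n} := Subring.subset_closure (Set.mem_singleton _)
  refine ⟨fun i => pow_mem (Subring.subset_closure (Set.mem_singleton s)) _, fun z hz => ?_⟩
  obtain ⟨c, hc, rfl⟩ := Subring.exists_eq_sum_mul_pow_of_mem_closure hn hsn hz
  refine ⟨c, ⟨hc, rfl⟩, fun d ⟨hd, hdc⟩ => funext fun i => sub_eq_zero.1 ?_⟩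
  refine eq_zero_of_sum_mul_pow_eq_zero hs (c := d - c) (fun i => sub_mem (hd i) (hc i)) ?_ i
  simp only [Pi.sub_apply, sub_mul, Finset.sum_sub_distrib, hdc, sub_self]

theorem exists_mem_closure_eq_pow_mul_iff {t : Ω} (ht : Transcendental (ZMod p) t) {k n : ℕ}
    (hk : k ≠ 0) (hkn : k ≤ n) {z : Ω} (hz : z ∈ Subring.closure {t ^ n}) :
    (∃ α ∈ Subring.closure {t}, z = t ^ k * α) ↔
      ∃ a ∈ Subring.closure {t ^ n}, z = t ^ n * a := by
  constructor
  · rintro ⟨α, hα, rfl⟩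
    obtain ⟨f, hf⟩ := (Subring.mem_closure_singleton_iff_exists_aeval p).1 hz
    obtain ⟨g, rfl⟩ := (Subring.mem_closure_singleton_iff_exists_aeval p).1 hα
    have hfg : expand (ZMod p) n f = X ^ k * g :=
      transcendental_iff_injective.1 ht (by rw [expand_aeval, hf, map_mul, map_pow, aeval_X])
    have hf0 : f.coeff 0 = 0 := by
      simpa [coeff_expand (show 0 < n by omega), coeff_X_pow_mul', hk.symm] using
        congrArg (coeff · 0) hfg
    obtain ⟨f', rfl⟩ := X_dvd_iff.2 hf0
    refine ⟨aeval (t ^ n) f', (Subring.mem_closure_singleton_iff_exists_aeval p).2 ⟨f', rfl⟩, ?_⟩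
    rw [← hf, map_mul, aeval_X]
  · rintro ⟨a, ha, rfl⟩
    refine ⟨t ^ (n - k) * a, mul_mem (pow_mem (Subring.subset_closure (Set.mem_singleton t)) _)
      (Subring.closure_singleton_pow_le t n ha), ?_⟩
    rw [← mul_assoc, pow_mul_pow_sub t hkn]

end CharP

section LinearOn

variable {Ω : Type*} [Field Ω] {ι : Type*} [Fintype ι]

theorem IsLinearOn.map_sum {A M N : Subring Ω} {φ : Ω → Ω} (hφ : IsLinearOn A M N φ)
    (hAM : A ≤ M) {b c : ι → Ω} (hb : ∀ i, b i ∈ M) (hc : ∀ i, c i ∈ A) :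
    φ (∑ i, c i * b i) = ∑ i, c i * φ (b i) := by
  classical
  have hterm : ∀ i, c i * b i ∈ M := fun i => M.mul_mem (hAM (hc i)) (hb i)
  suffices ∀ s : Finset ι, φ (∑ i ∈ s, c i * b i) = ∑ i ∈ s, c i * φ (b i) from this _
  intro s
  induction s using Finset.induction_on with
  | empty => simpa using hφ.map_smul 0 A.zero_mem 0 M.zero_mem
  | insert i s hi ih =>
    rw [Finset.sum_insert hi, Finset.sum_insert hi,
      hφ.map_add _ (hterm i) _ (M.sum_mem fun j _ => hterm j), hφ.map_smul _ (hc i) _ (hb i), ih]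

theorem IsBasisOn.exists_isLinearOn {A M N : Subring Ω} {b : ι → Ω} (hb : IsBasisOn A M b)
    (hAM : A ≤ M) (hAN : A ≤ N) {v : ι → Ω} (hv : ∀ i, v i ∈ N) :
    ∃ ψ : Ω → Ω, IsLinearOn A M N ψ ∧
      ∀ c : ι → Ω, (∀ i, c i ∈ A) → ψ (∑ i, c i * b i) = ∑ i, c i * v i := by
  classical
  let coord (x : Ω) : ι → Ω := if hx : x ∈ M then (hb.2 x hx).exists.choose else 0
  have hcoord : ∀ x ∈ M, (∀ i, coord x i ∈ A) ∧ x = ∑ i, coord x i * b i := fun x hx => by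
    simpa only [coord, dif_pos hx] using (hb.2 x hx).exists.choose_spec
  have hsum_mem : ∀ c : ι → Ω, (∀ i, c i ∈ A) → ∑ i, c i * b i ∈ M := fun c hc =>
    M.sum_mem fun i _ => M.mul_mem (hAM (hc i)) (hb.1 i)
  have hψ : ∀ c : ι → Ω, (∀ i, c i ∈ A) →
      ∑ i, coord (∑ j, c j * b j) i * v i = ∑ i, c i * v i := fun c hc => by
    rw [(hb.2 _ (hsum_mem c hc)).unique (hcoord _ (hsum_mem c hc)) ⟨hc, rfl⟩]
  refine ⟨fun x => ∑ i, coord x i * v i,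
    ⟨fun x hx => ?_, fun x hx y hy => ?_, fun a ha x hx => ?_⟩, hψ⟩
  · exact N.sum_mem fun i _ => N.mul_mem (hAN ((hcoord x hx).1 i)) (hv i)
  · obtain ⟨c, hc, rfl⟩ := (hb.2 x hx).exists
    obtain ⟨d, hd, rfl⟩ := (hb.2 y hy).exists
    have h := hψ (fun i => c i + d i) fun i => add_mem (hc i) (hd i)
    simp only [add_mul, Finset.sum_add_distrib] at h
    simp only [h, hψ c hc, hψ d hd]
  · obtain ⟨c, hc, rfl⟩ := (hb.2 x hx).exists
    have h := hψ (fun i => a * c i) fun i => mul_mem ha (hc i)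
    simp only [mul_assoc, ← Finset.mul_sum] at h
    simp only [h, hψ c hc]

theorem exists_isLinearOn_extension_iff {A B M N P : Subring Ω} {b e a : ι → Ω} {φ : Ω → Ω}
    (hφ : IsLinearOn A M P φ) (hAM : A ≤ M) (hb : ∀ i, b i ∈ M)
    (hM : ∀ z ∈ M, ∃ c : ι → Ω, (∀ i, c i ∈ A) ∧ z = ∑ i, c i * b i)
    (he : IsBasisOn B N e) (hBN : B ≤ N) (hAB : A ≤ B) (ha : ∀ i, a i ∈ B)
    (hbe : ∀ i, b i = a i * e i) :
    (∃ φbar : Ω → Ω, IsLinearOn B N B φbar ∧ ∀ z ∈ M, φbar z = φ z) ↔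
      ∀ i, ∃ c ∈ B, φ (b i) = a i * c := by
  constructor
  · rintro ⟨φbar, hφbar, hagree⟩ i
    refine ⟨φbar (e i), hφbar.maps_to _ (he.1 i), ?_⟩
    rw [← hagree _ (hb i), hbe, hφbar.map_smul _ (ha i) _ (he.1 i)]
  · intro h
    choose c hcB hc using h
    obtain ⟨ψ, hψ, hψsum⟩ := he.exists_isLinearOn hBN le_rfl hcB
    refine ⟨ψ, hψ, fun z hz => ?_⟩
    obtain ⟨r, hr, rfl⟩ := hM z hz
    calc ψ (∑ i, r i * b i) = ψ (∑ i, (r i * a i) * e i) := by simp only [hbe, mul_assoc]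
      _ = ∑ i, (r i * a i) * c i := hψsum _ fun i => B.mul_mem (hAB (hr i)) (ha i)
      _ = ∑ i, r i * φ (b i) := by simp only [hc, mul_assoc]
      _ = φ (∑ i, r i * b i) := (hφ.map_sum hAM hb hr).symm

end LinearOn

/-- `t` plays the role of `x` and `s3` of `x^{1/3}`, so `y^{1/3} = s3⁴` and `y^{2/3} = s3⁸`. -/
theorem extension_criterion_y_eq_x4 {Ω : Type*} [Field Ω] [CharP Ω 3]
    (t s3 : Ω) (hs3 : s3 ^ 3 = t)
    (htrans : ∀ f : Polynomial Ω, (∀ i, f.coeff i ∈ (⊥ : Subring Ω)) →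
      f.eval t = 0 → f = 0)
    (R S : Subring Ω) (hR : R = Subring.closure {t ^ 4}) (hS : S = Subring.closure {t})
    (φ : Ω → Ω) (hφ : IsLinearOn R (pRoots 3 1 R) R φ) :
    ((∃ φbar : Ω → Ω, IsLinearOn S (pRoots 3 1 S) S φbar ∧
        ∀ z ∈ pRoots 3 1 R, φbar z = φ z) ↔
      ((∃ a ∈ S, φ (s3 ^ 4) = t * a) ∧ (∃ a ∈ S, φ (s3 ^ 8) = t ^ 2 * a))) ∧
    (((∃ a ∈ S, φ (s3 ^ 4) = t * a) ∧ (∃ a ∈ S, φ (s3 ^ 8) = t ^ 2 * a)) ↔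
      ((∃ a ∈ R, φ (s3 ^ 4) = t ^ 4 * a) ∧ (∃ a ∈ R, φ (s3 ^ 8) = t ^ 4 * a))) := by
  subst hR hS
  let : Algebra (ZMod 3) Ω := ZMod.algebra Ω 3
  have ht : Transcendental (ZMod 3) t := transcendental_zmod_of_forall_coeff_mem_bot htrans
  have hs : Transcendental (ZMod 3) s3 := fun h => ht (hs3 ▸ h.pow 3)
  have ht4 : t ^ 4 = (s3 ^ 4) ^ 3 := by rw [← hs3]; ring
  have hRoots : pRoots 3 1 (Subring.closure {t ^ 4}) = Subring.closure {s3 ^ 4} := by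
    rw [ht4, pRoots_closure_singleton_pow_char]
  have hSRoots : pRoots 3 1 (Subring.closure {t}) = Subring.closure {s3} := by
    rw [← hs3, pRoots_closure_singleton_pow_char]
  rw [hRoots] at hφ ⊢
  rw [hSRoots]
  have hmem (u : Ω) : u ∈ Subring.closure {u} := Subring.subset_closure (Set.mem_singleton u)
  have hRS := Subring.closure_singleton_pow_le t 4
  have hext := exists_isLinearOn_extension_iff (b := fun i : Fin 3 => (s3 ^ 4) ^ (i : ℕ))
    (e := fun i => s3 ^ (i : ℕ)) (a := fun i => t ^ (i : ℕ)) hφ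
    (ht4 ▸ Subring.closure_singleton_pow_le _ 3) (fun i => pow_mem (hmem _) _)
    (fun z hz => Subring.exists_eq_sum_mul_pow_of_mem_closure three_ne_zero (ht4 ▸ hmem _) hz)
    (hs3 ▸ isBasisOn_closure_singleton_pow hs three_ne_zero)
    (hs3 ▸ Subring.closure_singleton_pow_le s3 3) hRS (fun i => pow_mem (hmem t) _)
    (fun i => by rw [← hs3, ← mul_pow, ← pow_succ])
  have hs8 : s3 ^ 8 ∈ Subring.closure {s3 ^ 4} := by
    rw [show s3 ^ 8 = (s3 ^ 4) ^ 2 by ring]; exact pow_mem (hmem _) 2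
  have hdvd (k : ℕ) (hk : k ≠ 0) (hk4 : k ≤ 4) {z : Ω} (hz : z ∈ Subring.closure {s3 ^ 4}) :=
    exists_mem_closure_eq_pow_mul_iff ht hk hk4 (hφ.maps_to z hz)
  refine ⟨hext.trans ⟨fun h => ⟨by simpa using h 1, by simpa [← pow_mul] using h 2⟩, ?_⟩,
    and_congr (by simpa using hdvd 1 one_ne_zero (by norm_num) (hmem _))
      (hdvd 2 two_ne_zero (by norm_num) hs8)⟩
  rintro ⟨h1, h2⟩ i
  fin_cases i
  · exact ⟨φ 1, hRS (hφ.maps_to 1 (one_mem _)), by simp⟩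
  · simpa using h1
  · simpa [← pow_mul] using h2
end

section
/- Let (R,𝔭) ⊆ (S,𝔮) be a tamely ramified generically finite extension of F-finite DVRs of characteristic p>0 with ramification index n, and let π : Spec S → Spec R be the induced map. With e such that n | p^e−1, b = (p^e−1)/n, and φ the map sending u_1^{1/p^e} r^{b/p^e} to 1 and all other basis elements to 0, one has Δ_φ = (1/(p^e−1))·div_R(r^{p^e−1−b}) and π*Δ_φ = Ram_π, i.e. the pullback of Δ_φ to Spec S equals (n−1)·div_S(s) where s is a uniformizer of S. -/
open scoped BigOperators

/-!
`A = R^{1/p^e}` is a DVR with uniformizer `ρ = r^{1/p^e}`, so `γ = ω ρ^k` with `ω` a unit and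
the claim is `k = p^e - 1 - b`. Since `Φ(ω ρ^{k+b}) = φ(ρ^b) = 1` and `Φ(ρ^{p^e} A) ⊆ rR`, we
get `k + b < p^e`. Conversely, `φ` kills every `u_j ρ^i` with `b < i < p^e`, so by descending
induction on `i` (using that the `u_j` span `A` modulo `ρ`) it maps `ρ^{b+1} A` into `rR`. Hence
`φ(ρ^{b+1} ·)/r` is an `R`-linear map `Φ(t ·)`, which gives `Φ(t ρ^{p^e-1}) = 1`; but
`Φ(ρ^{k+b+1} A) = φ(ρ^{b+1} ω⁻¹ A) ⊆ rR`, forcing `k + b + 1 ≥ p^e`. Finally `r = uu s^n`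
turns `r^k` into a unit of `S` times `s^{nk}`.
-/

theorem Nat.mul_sub_eq_pred_mul {n a b : ℕ} (h : n * b = a) : n * (a - b) = (n - 1) * a := by
  cases n with
  | zero => simp
  | succ n => rw [Nat.mul_sub, h, Nat.add_sub_cancel, Nat.succ_mul, Nat.add_sub_cancel]

section

variable {Ω : Type*} [Field Ω]

namespace IsLinearOn

variable {A M N : Subring Ω} {φ : Ω → Ω}

theorem map_zero (hφ : IsLinearOn A M N φ) : φ 0 = 0 := by
  simpa using hφ.map_smul 0 A.zero_mem 0 M.zero_mem

theorem map_sum_s13 (hφ : IsLinearOn A M N φ) {ι : Type*} (s : Finset ι) {f : ι → Ω}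
    (hf : ∀ i ∈ s, f i ∈ M) : φ (∑ i ∈ s, f i) = ∑ i ∈ s, φ (f i) := by
  classical
  induction s using Finset.induction_on with
  | empty => simpa using hφ.map_zero
  | insert i s hi ih =>
    rw [Finset.sum_insert hi, Finset.sum_insert hi,
      hφ.map_add _ (hf i (s.mem_insert_self i)) _
        (sum_mem fun j hj => hf j (Finset.mem_insert_of_mem hj)),
      ih fun j hj => hf j (Finset.mem_insert_of_mem hj)]

theorem comp_mul_div (hφ : IsLinearOn A M N φ) {y r : Ω} (hy : y ∈ M) (hr : r ≠ 0)
    (hdvd : ∀ x ∈ M, ∃ w ∈ N, φ (y * x) = r * w) :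
    IsLinearOn A M N (fun x => φ (y * x) / r) where
  maps_to x hx := by
    obtain ⟨w, hw, hφw⟩ := hdvd x hx
    simpa [hφw, mul_div_cancel_left₀ _ hr] using hw
  map_add x hx x' hx' := by
    simp only [mul_add, hφ.map_add _ (M.mul_mem hy hx) _ (M.mul_mem hy hx'), add_div]
  map_smul a ha x hx := by
    simp only [mul_left_comm y a, hφ.map_smul a ha _ (M.mul_mem hy hx), mul_div_assoc]

end IsLinearOn

theorem lt_of_map_pow_mul_eq_one {R A : Subring Ω} {φ : Ω → Ω} {r ρ x : Ω} {k E : ℕ}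
    (hrnu : ¬∃ w ∈ R, r * w = 1) (hρA : ρ ∈ A)
    (hE : ∀ y ∈ A, ∃ w ∈ R, φ (ρ ^ E * y) = r * w) (hx : x ∈ A) (h : φ (ρ ^ k * x) = 1) :
    k < E := by
  by_contra! hkE
  obtain ⟨w, hw, hφw⟩ := hE (ρ ^ (k - E) * x) (A.mul_mem (A.pow_mem hρA _) hx)
  rw [← mul_assoc, ← pow_add, Nat.add_sub_cancel' hkE, h] at hφw
  exact hrnu ⟨w, hw, hφw.symm⟩

section DescendingInduction

variable {R A : Subring Ω} {φ : Ω → Ω} {r ρ : Ω} {q : ℕ}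

theorem IsLinearOn.exists_map_pow_mul_eq_mul_of_le (hφ : IsLinearOn R A R φ) (hr : r ∈ R)
    (hρA : ρ ∈ A) (hρ : ρ ^ q = r) {E : ℕ} (hE : q ≤ E) {x : Ω} (hx : x ∈ A) :
    ∃ w ∈ R, φ (ρ ^ E * x) = r * w := by
  have hmem : ρ ^ (E - q) * x ∈ A := A.mul_mem (A.pow_mem hρA _) hx
  refine ⟨_, hφ.maps_to _ hmem, ?_⟩
  rw [← hφ.map_smul r hr _ hmem, ← hρ, ← mul_assoc, ← pow_add, Nat.add_sub_cancel' hE]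

theorem IsLinearOn.exists_map_pow_mul_eq_mul_of_vanish (hφ : IsLinearOn R A R φ)
    (hRA : R ≤ A) (hr : r ∈ R) (hρA : ρ ∈ A) (hρ : ρ ^ q = r)
    {ι : Type*} [Fintype ι] {u : ι → Ω} (hu : IsBasisModOn R A r ρ u) {c : ℕ}
    (hvanish : ∀ j i, c ≤ i → i < q → φ (u j * ρ ^ i) = 0)
    {E : ℕ} (hE : c ≤ E) {x : Ω} (hx : x ∈ A) : ∃ w ∈ R, φ (ρ ^ E * x) = r * w := by
  obtain ⟨d, hd⟩ : ∃ d, q ≤ E + d := ⟨q, Nat.le_add_left q E⟩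
  induction d generalizing E x with
  | zero => exact hφ.exists_map_pow_mul_eq_mul_of_le hr hρA hρ hd hx
  | succ d ih =>
    rcases le_or_gt q E with hqE | hEq
    · exact hφ.exists_map_pow_mul_eq_mul_of_le hr hρA hρ hqE hx
    obtain ⟨a, ha, y, hy, hxy⟩ := hu.2.1 x hx
    have hterm : ∀ j, u j * ρ ^ E ∈ A := fun j => A.mul_mem (hu.1 j) (A.pow_mem hρA E)
    have hsplit : ρ ^ E * x = ∑ j, a j * (u j * ρ ^ E) + ρ ^ (E + 1) * y := by
      rw [sub_eq_iff_eq_add'.mp hxy, mul_add, Finset.mul_sum, pow_succ]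
      congr 1
      · exact Finset.sum_congr rfl fun j _ => by ring
      · ring
    have hsum : φ (∑ j, a j * (u j * ρ ^ E)) = 0 := by
      rw [hφ.map_sum_s13 _ fun j _ => A.mul_mem (hRA (ha j)) (hterm j)]
      refine Finset.sum_eq_zero fun j _ => ?_
      rw [hφ.map_smul _ (ha j) _ (hterm j), hvanish j E hE hEq, mul_zero]
    rw [hsplit, hφ.map_add _ (sum_mem fun j _ => A.mul_mem (hRA (ha j)) (hterm j)) _
      (A.mul_mem (A.pow_mem hρA _) hy), hsum, zero_add]
    exact ih (by omega) hy (by omega)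

end DescendingInduction

theorem exists_map_pow_pred_mul_eq_one_of_generator {R A : Subring Ω} {φ Φ : Ω → Ω}
    {r ρ : Ω} {q b : ℕ} (hq : 0 < q) (hr : r ∈ R) (hr0 : r ≠ 0) (hρA : ρ ∈ A)
    (hρ : ρ ^ q = r) (hφ : IsLinearOn R A R φ)
    (hΦgen : ∀ ψ : Ω → Ω, IsLinearOn R A R ψ → ∃ t ∈ A, ∀ a ∈ A, ψ a = Φ (t * a))
    (hdvd : ∀ x ∈ A, ∃ w ∈ R, φ (ρ ^ (b + 1) * x) = r * w) (hφb : φ (ρ ^ b) = 1) :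
    ∃ t ∈ A, Φ (ρ ^ (q - 1) * t) = 1 := by
  obtain ⟨t, htA, hψ⟩ := hΦgen _ (hφ.comp_mul_div (A.pow_mem hρA _) hr0 hdvd)
  refine ⟨t, htA, ?_⟩
  have hexp : ρ ^ (b + 1) * ρ ^ (q - 1) = r * ρ ^ b := by
    rw [← pow_add, ← hρ, ← pow_add]
    congr 1
    omega
  rw [mul_comm, ← hψ _ (A.pow_mem hρA _), hexp, hφ.map_smul r hr _ (A.pow_mem hρA _), hφb,
    mul_one, div_self hr0]

theorem add_add_one_eq_of_generator {R A : Subring Ω} {φ Φ : Ω → Ω} {r ρ ω ω' : Ω}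
    {q b k : ℕ} (hq : 0 < q) (hr : r ∈ R) (hr0 : r ≠ 0) (hrnu : ¬∃ w ∈ R, r * w = 1)
    (hρA : ρ ∈ A) (hρ : ρ ^ q = r) (hφ : IsLinearOn R A R φ) (hΦ : IsLinearOn R A R Φ)
    (hΦgen : ∀ ψ : Ω → Ω, IsLinearOn R A R ψ → ∃ t ∈ A, ∀ a ∈ A, ψ a = Φ (t * a))
    (hωA : ω ∈ A) (hω'A : ω' ∈ A) (hωω' : ω * ω' = 1)
    (hrep : ∀ a ∈ A, φ a = Φ (ω * ρ ^ k * a))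
    (hdvd : ∀ x ∈ A, ∃ w ∈ R, φ (ρ ^ (b + 1) * x) = r * w) (hφb : φ (ρ ^ b) = 1) :
    k + b + 1 = q := by
  have hupper : k + b < q := by
    refine lt_of_map_pow_mul_eq_one hrnu hρA
      (fun y hy => hΦ.exists_map_pow_mul_eq_mul_of_le hr hρA hρ le_rfl hy) hωA ?_
    rw [← hφb, hrep _ (A.pow_mem hρA b), pow_add]
    ring_nf
  have hΦdvd : ∀ y ∈ A, ∃ w ∈ R, Φ (ρ ^ (k + b + 1) * y) = r * w := by
    intro y hy
    obtain ⟨w, hw, hφw⟩ := hdvd (ω' * y) (A.mul_mem hω'A hy)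
    refine ⟨w, hw, ?_⟩
    rw [← hφw, hrep _ (A.mul_mem (A.pow_mem hρA _) (A.mul_mem hω'A hy))]
    congr 1
    linear_combination (-(ρ ^ (k + b + 1) * y)) * hωω'
  obtain ⟨t, htA, hΦt⟩ :=
    exists_map_pow_pred_mul_eq_one_of_generator hq hr hr0 hρA hρ hφ hΦgen hdvd hφb
  have := lt_of_map_pow_mul_eq_one hrnu hρA hΦdvd htA hΦt
  omega

section PRoots

variable {p : ℕ} [Fact p.Prime] [CharP Ω p] {e : ℕ} {R : Subring Ω}

theorem le_pRoots : R ≤ pRoots p e R := fun _ hx => R.pow_mem hx _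

theorem isDVRWith_pRoots {r ρ : Ω} (hR : IsDVRWith R r) (hρ : ρ ^ p ^ e = r) :
    IsDVRWith (pRoots p e R) ρ := by
  obtain ⟨hrR, hr0, hrnu, hdec⟩ := hR
  have hρ0 : ρ ≠ 0 := by
    rintro rfl
    exact hr0 (hρ ▸ zero_pow (pow_ne_zero e (Fact.out : p.Prime).ne_zero))
  have hρk (k : ℕ) : (ρ ^ k) ^ p ^ e = r ^ k := by rw [← pow_mul, mul_comm, pow_mul, hρ]
  refine ⟨show ρ ^ p ^ e ∈ R from hρ ▸ hrR, hρ0, ?_, ?_⟩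
  · rintro ⟨w, hw, hρw⟩
    exact hrnu ⟨w ^ p ^ e, hw, by rw [← hρ, ← mul_pow, hρw, one_pow]⟩
  · intro x hx hx0
    obtain ⟨k, w, hwR, ⟨w', hw'R, hww'⟩, hxw⟩ := hdec _ hx (pow_ne_zero _ hx0)
    have hρkx : ρ ^ k * x ≠ 0 := mul_ne_zero (pow_ne_zero _ hρ0) hx0
    refine ⟨k, x / ρ ^ k, show (x / ρ ^ k) ^ p ^ e ∈ R from ?_,
      ⟨ρ ^ k / x, show (ρ ^ k / x) ^ p ^ e ∈ R from ?_, ?_⟩,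
      (div_mul_cancel₀ x (pow_ne_zero k hρ0)).symm⟩
    · rwa [div_pow, hρk, hxw, mul_div_cancel_right₀ _ (pow_ne_zero _ hr0)]
    · rwa [div_pow, hρk, hxw, div_mul_cancel_right₀ (pow_ne_zero _ hr0),
        inv_eq_of_mul_eq_one_right hww']
    · rw [div_mul_div_comm, mul_comm x, div_self hρkx]

end PRoots

theorem exists_unit_mul_pow_of_le {R S : Subring Ω} (hRS : R ≤ S) {c w r s uu : Ω} {n k : ℕ}
    (hw : w ∈ R ∧ ∃ w' ∈ R, w * w' = 1) (hc : c = w * r ^ k)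
    (huu : uu ∈ S ∧ ∃ w ∈ S, uu * w = 1) (hrs : r = uu * s ^ n) :
    ∃ v ∈ S, (∃ v' ∈ S, v * v' = 1) ∧ c = v * s ^ (n * k) := by
  obtain ⟨hwR, w', hw'R, hww'⟩ := hw
  obtain ⟨huuS, uu', huu'S, huuu'⟩ := huu
  refine ⟨w * uu ^ k, S.mul_mem (hRS hwR) (S.pow_mem huuS k),
    ⟨w' * uu' ^ k, S.mul_mem (hRS hw'R) (S.pow_mem huu'S k), ?_⟩, ?_⟩
  · rw [mul_mul_mul_comm, ← mul_pow, hww', huuu', one_pow, one_mul]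
  · rw [hc, hrs, mul_pow, ← pow_mul, mul_assoc]

end

/-- `Δ_φ = (1/(p^e-1)) div_R(c)` with `c = γ^{p^e}`, so the two divisor identities say that
`c` is a unit of `R` times `r^{p^e-1-b}` and a unit of `S` times `s^{(n-1)(p^e-1)}`. -/
theorem tame_divisor_of_explicit_map_general {Ω : Type*} [Field Ω]
    (p : ℕ) [Fact p.Prime] [CharP Ω p]
    (R S : Subring Ω) (r s uu : Ω) (n : ℕ) (hRS : R ≤ S)
    (hR : IsDVRWith R r)
    (huu : uu ∈ S ∧ ∃ w ∈ S, uu * w = 1) (hrs : r = uu * s ^ n)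
    (e : ℕ) (b : ℕ) (hb : n * b = p ^ e - 1)
    (ρ : Ω) (hρ : ρ ^ p ^ e = r)
    (m : ℕ) (u : Fin (m + 1) → Ω)
    (hubasis : IsBasisModOn R (pRoots p e R) r ρ u)
    (φ : Ω → Ω) (hφlin : IsLinearOn R (pRoots p e R) R φ)
    (hφb : φ (ρ ^ b) = 1)
    (hφ0 : ∀ (j : Fin (m + 1)) (i : ℕ), i ≤ p ^ e - 1 →
      ¬(j = 0 ∧ i = b) → φ (u j * ρ ^ i) = 0)
    (Φ : Ω → Ω) (hΦlin : IsLinearOn R (pRoots p e R) R Φ)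
    (hΦgen : ∀ ψ : Ω → Ω, IsLinearOn R (pRoots p e R) R ψ →
      ∃ t ∈ pRoots p e R, ∀ a ∈ pRoots p e R, ψ a = Φ (t * a))
    (γ : Ω) (hγ : γ ∈ pRoots p e R)
    (hrep : ∀ a ∈ pRoots p e R, φ a = Φ (γ * a)) :
    (∃ w ∈ R, (∃ w' ∈ R, w * w' = 1) ∧ γ ^ p ^ e = w * r ^ (p ^ e - 1 - b)) ∧
    (∃ w ∈ S, (∃ w' ∈ S, w * w' = 1) ∧
      γ ^ p ^ e = w * s ^ ((n - 1) * (p ^ e - 1))) ∧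
    n * (p ^ e - 1 - b) = (n - 1) * (p ^ e - 1) := by
  obtain ⟨hρA, -, -, hdecA⟩ := isDVRWith_pRoots (e := e) hR hρ
  obtain ⟨hrR, hr0, hrnu, -⟩ := hR
  have hφdvd : ∀ x ∈ pRoots p e R, ∃ w ∈ R, φ (ρ ^ (b + 1) * x) = r * w := fun x hx =>
    hφlin.exists_map_pow_mul_eq_mul_of_vanish le_pRoots hrR hρA hρ hubasis
      (fun j i hi hiq => hφ0 j i (by omega) (by omega)) le_rfl hx
  have hγ0 : γ ≠ 0 := by
    rintro rfl
    simpa [hφb, hΦlin.map_zero] using hrep _ (pow_mem hρA b)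
  obtain ⟨k, ω, hωA, ⟨ω', hω'A, hωω'⟩, rfl⟩ := hdecA γ hγ hγ0
  have hk : k = p ^ e - 1 - b := by
    have := add_add_one_eq_of_generator (pow_pos (Fact.out : p.Prime).pos e) hrR hr0 hrnu
      hρA hρ hφlin hΦlin hΦgen hωA hω'A hωω' hrep hφdvd hφb
    omega
  subst hk
  have hγpow : (ω * ρ ^ (p ^ e - 1 - b)) ^ p ^ e = ω ^ p ^ e * r ^ (p ^ e - 1 - b) := by
    rw [mul_pow, ← pow_mul, mul_comm _ (p ^ e), pow_mul, hρ]
  have hωR : ω ^ p ^ e ∈ R ∧ ∃ w' ∈ R, ω ^ p ^ e * w' = 1 :=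
    ⟨hωA, ω' ^ p ^ e, hω'A, by rw [← mul_pow, hωω', one_pow]⟩
  have harith := Nat.mul_sub_eq_pred_mul hb
  exact ⟨⟨_, hωR.1, hωR.2, hγpow⟩, harith ▸ exists_unit_mul_pow_of_le hRS hωR hγpow huu hrs,
    harith⟩

/-- in the tame setting, writing `φ(·) = Φ(γ·)` for a generator `Φ` of
`Hom_R(R^{1/p^e}, R)` and `c = γ^{p^e}`, one has `Δ_φ = (1/(p^e-1)) div_R(r^{p^e-1-b})`
(i.e. `c` is a unit times `r^{p^e-1-b}`) and `π*Δ_φ = Ram_π` (i.e. `c` is a unit times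
`s^{(n-1)(p^e-1)}` in `S`, and `n(p^e-1-b) = (n-1)(p^e-1)`). -/
theorem tame_divisor_of_explicit_map {Ω : Type*} [Field Ω]
    (p : ℕ) [Fact p.Prime] [CharP Ω p]
    (R S : Subring Ω) (r s uu : Ω) (n : ℕ) (hRS : R ≤ S)
    (hR : IsDVRWith R r) (hS : IsDVRWith S s)
    (huu : uu ∈ S ∧ ∃ w ∈ S, uu * w = 1) (hrs : r = uu * s ^ n)
    (hgensep : IsSeparableOn (fracField R) (fracField S))
    (hressep : ∀ x ∈ S, ∃ f : Polynomial Ω, (∀ i, f.coeff i ∈ (R : Set Ω)) ∧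
      (∃ y ∈ S, f.eval x = s * y) ∧
      ¬ ∃ y ∈ S, (Polynomial.derivative f).eval x = s * y)
    (hn : 0 < n) (htame : ¬ p ∣ n)
    (e : ℕ) (he : 0 < e) (b : ℕ) (hb : n * b = p ^ e - 1)
    (ρ : Ω) (hρ : ρ ^ p ^ e = r)
    (m : ℕ) (u : Fin (m + 1) → Ω) (hu1 : u 0 = 1)
    (hubasis : IsBasisModOn R (pRoots p e R) r ρ u)
    (φ : Ω → Ω) (hφlin : IsLinearOn R (pRoots p e R) R φ)
    (hφb : φ (ρ ^ b) = 1)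
    (hφ0 : ∀ (j : Fin (m + 1)) (i : ℕ), i ≤ p ^ e - 1 →
      ¬(j = 0 ∧ i = b) → φ (u j * ρ ^ i) = 0)
    (Φ : Ω → Ω) (hΦlin : IsLinearOn R (pRoots p e R) R Φ)
    (hΦgen : ∀ ψ : Ω → Ω, IsLinearOn R (pRoots p e R) R ψ →
      ∃ t ∈ pRoots p e R, ∀ a ∈ pRoots p e R, ψ a = Φ (t * a))
    (γ : Ω) (hγ : γ ∈ pRoots p e R)
    (hrep : ∀ a ∈ pRoots p e R, φ a = Φ (γ * a)) :
    (∃ w ∈ R, (∃ w' ∈ R, w * w' = 1) ∧ γ ^ p ^ e = w * r ^ (p ^ e - 1 - b)) ∧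
    (∃ w ∈ S, (∃ w' ∈ S, w * w' = 1) ∧
      γ ^ p ^ e = w * s ^ ((n - 1) * (p ^ e - 1))) ∧
    n * (p ^ e - 1 - b) = (n - 1) * (p ^ e - 1) :=
  tame_divisor_of_explicit_map_general p R S r s uu n hRS hR huu hrs e b hb ρ hρ m u hubasis φ hφlin
    hφb hφ0 Φ hΦlin hΦgen γ hγ hrep
end
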